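/- In the game saliquant, for every b ≥ 1, SG(2^b) = 2^(b−1) − 1. -/
import Mathlib


/-- Sprague–Grundy values for the game saliquant: the options of a position `n`
are the positions `n - k` where `1 ≤ k ≤ n` and `k` does not divide `n`, and
`sg n` is the least nonnegative integer not among the values of the options. -/
noncomputable def sg : ℕ → ℕ
  | n => sInf {m : ℕ | ∀ k, 1 ≤ k → k ≤ n → ¬ k ∣ n → sg (n - k) ≠ m}
decreasing_by omega

lemma sg_lt : ∀ n : ℕ, 1 ≤ n → 2 * sg n + 1 ≤ n := by
  intro n
  induction n using Nat.strong_induction_on with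
  | _ n ih =>
    intro hn
    by_contra hcon
    set M := {m : ℕ | ∀ k, 1 ≤ k → k ≤ n → ¬ k ∣ n → sg (n - k) ≠ m} with hM
    have hsg : sg n = sInf M := by rw [sg]
    have hnm : (n - 1) / 2 ∉ M := by
      intro h
      have := Nat.sInf_le h
      omega
    simp only [hM, Set.mem_setOf_eq] at hnm
    push_neg at hnm
    obtain ⟨k, hk1, hk2, hkd, hkeq⟩ := hnm
    have hkn : k ≠ n := fun h => hkd (h ▸ dvd_refl n)
    have hk1' : k ≠ 1 := fun h => hkd (h ▸ one_dvd n)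
    have := ih (n - k) (by omega) (by omega)
    rw [hkeq] at this
    omega

lemma sg_odd : ∀ m : ℕ, sg (2 * m + 1) = m := by
  intro m
  induction m using Nat.strong_induction_on with
  | _ m ih =>
    set n := 2 * m + 1 with hn
    set M := {v : ℕ | ∀ k, 1 ≤ k → k ≤ n → ¬ k ∣ n → sg (n - k) ≠ v} with hM
    have hsg : sg n = sInf M := by rw [sg]
    have hmem : m ∈ M := by
      intro k hk1 hk2 hkd heq
      have hkn : k ≠ n := fun h => hkd (h ▸ dvd_refl n)
      have := sg_lt (n - k) (by omega)
      omega
    have hlt : ∀ v, v < m → v ∉ M := by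
      intro v hv hvM
      have hkd : ¬ (2 * (m - v)) ∣ n := by
        intro h
        have h2 : (2 : ℕ) ∣ n := dvd_trans ⟨m - v, rfl⟩ h
        omega
      have h3 := hvM (2 * (m - v)) (by omega) (by omega) hkd
      have heq : n - 2 * (m - v) = 2 * v + 1 := by omega
      rw [heq, ih v hv] at h3
      exact h3 rfl
    refine le_antisymm (hsg ▸ Nat.sInf_le hmem) ?_
    by_contra hcon
    have hin := Nat.sInf_mem (⟨m, hmem⟩ : M.Nonempty)
    exact hlt (sInf M) (by omega) hin

theorem saliquant_powers_of_two (b : ℕ) (hb : 1 ≤ b) :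
    sg (2 ^ b) = 2 ^ (b - 1) - 1 := by
  obtain ⟨c, rfl⟩ : ∃ c, b = c + 1 := ⟨b - 1, by omega⟩
  simp only [Nat.add_sub_cancel]
  set p := 2 ^ c with hp
  have hp1 : 1 ≤ p := Nat.one_le_two_pow
  have hn : 2 ^ (c + 1) = 2 * p := by rw [pow_succ]; ring
  rw [hn]
  set n := 2 * p with hndef
  set M := {v : ℕ | ∀ k, 1 ≤ k → k ≤ n → ¬ k ∣ n → sg (n - k) ≠ v} with hM
  have hsg : sg n = sInf M := by rw [sg]
  have hmem : p - 1 ∈ M := by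
    intro k hk1 hk2 hkd heq
    have hk1' : k ≠ 1 := fun h => hkd (h ▸ one_dvd n)
    have hk2' : k ≠ 2 := fun h => hkd (h ▸ ⟨p, hndef⟩)
    have hkn : k ≠ n := fun h => hkd (h ▸ dvd_refl n)
    have := sg_lt (n - k) (by omega)
    omega
  have hlt : ∀ v, v < p - 1 → v ∉ M := by
    intro v hv hvM
    have hk3 : 3 ≤ n - (2 * v + 1) := by omega
    have hkodd : (n - (2 * v + 1)) % 2 = 1 := by omega
    have hkd : ¬ (n - (2 * v + 1)) ∣ n := by
      intro h
      have h' : (n - (2 * v + 1)) ∣ 2 ^ (c + 1) := by rw [hn]; exact h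
      obtain ⟨i, hi, hki⟩ := (Nat.dvd_prime_pow Nat.prime_two).mp h'
      rcases Nat.eq_zero_or_pos i with h0 | h0
      · rw [h0, pow_zero] at hki; omega
      · have h2 : (2 : ℕ) ∣ 2 ^ i := dvd_pow_self 2 (by omega)
        rw [← hki] at h2
        omega
    have h3 := hvM (n - (2 * v + 1)) (by omega) (by omega) hkd
    have heq : n - (n - (2 * v + 1)) = 2 * v + 1 := by omega
    rw [heq, sg_odd v] at h3
    exact h3 rfl
  refine le_antisymm (hsg ▸ Nat.sInf_le hmem) ?_
  by_contra hcon
  have hin := Nat.sInf_mem (⟨p - 1, hmem⟩ : M.Nonempty)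
  exact hlt (sInf M) (by omega) hin
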